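/- If K is a field with K' ≠ K and p = [K' : K], then every irreducible polynomial over K has degree a power of p. -/

import Mathlib

open IntermediateField Polynomial

/-- The anti-closure of `K`: the intersection of all finite nontrivial extensions of `K`
inside a fixed algebraic closure. -/
noncomputable def antiClosure (K : Type*) [Field K] :
    IntermediateField K (AlgebraicClosure K) :=
  ⨅ L ∈ {L : IntermediateField K (AlgebraicClosure K) |
      L ≠ ⊥ ∧ FiniteDimensional K L}, L

section Aux

variable {K : Type*} [Field K]

theorem antiClosure_le {M : IntermediateField K (AlgebraicClosure K)}
    (h1 : M ≠ ⊥) (h2 : FiniteDimensional K M) : antiClosure K ≤ M :=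
  iInf₂_le M ⟨h1, h2⟩

theorem finrank_antiClosure_dvd {M : IntermediateField K (AlgebraicClosure K)}
    (h1 : M ≠ ⊥) (h2 : FiniteDimensional K M) :
    Module.finrank K (antiClosure K) ∣ Module.finrank K M :=
  ⟨_, (IntermediateField.finrank_bot_mul_relfinrank (antiClosure_le h1 h2)).symm⟩

end Aux


theorem galois_core {K : Type*} [Field K] (h : antiClosure K ≠ ⊥) {p : ℕ}
    (hp : p = Module.finrank K (antiClosure K)) (hp1 : p ≠ 1)
    {E : Type*} [Field E] [Algebra K E] [FiniteDimensional K E] [IsGalois K E]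
    (ι : E →ₐ[K] AlgebraicClosure K) :
    ∃ v : ℕ, Module.finrank K E = p.minFac ^ v ∧
      (Module.finrank K E ≠ 1 → p = p.minFac) := by
  classical
  set q := p.minFac with hqdef
  have hqprime : q.Prime := Nat.minFac_prime hp1
  haveI : Fact q.Prime := ⟨hqprime⟩
  have C1 : ∀ F1 : IntermediateField K E, F1 ≠ ⊥ → p ∣ Module.finrank K F1 := by
    intro F1 hF1
    have e := IntermediateField.equivMap F1 ι
    haveI : FiniteDimensional K (F1.map ι) := Module.Finite.equiv e.toLinearEquiv
    have hfr : Module.finrank K (F1.map ι) = Module.finrank K F1 :=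
      e.toLinearEquiv.finrank_eq.symm
    have hne : F1.map ι ≠ ⊥ := fun hb => hF1 (IntermediateField.map_injective ι
      (by rw [hb, IntermediateField.map_bot]))
    have hdvd := finrank_antiClosure_dvd hne ‹_›
    rwa [← hp, hfr] at hdvd
  obtain ⟨P⟩ := (inferInstance : Nonempty (Sylow q (E ≃ₐ[K] E)))
  have hG : Fintype.card (E ≃ₐ[K] E) = Module.finrank K E :=
    by rw [← Nat.card_eq_fintype_card]; exact IsGalois.card_aut_eq_finrank K E
  set v := (Nat.card (E ≃ₐ[K] E)).factorization q with hv
  have hPcard : Nat.card (P : Subgroup (E ≃ₐ[K] E)) = q ^ v := P.card_eq_multiplicity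
  have hcard0 : Nat.card (E ≃ₐ[K] E) ≠ 0 := Nat.card_pos.ne'
  have artin : ∀ H : Subgroup (E ≃ₐ[K] E),
      Module.finrank K (IntermediateField.fixedField H) * Nat.card H =
        Nat.card (E ≃ₐ[K] E) := by
    intro H
    rw [← IntermediateField.finrank_fixedField_eq_card H,
      Module.finrank_mul_finrank, Nat.card_eq_fintype_card]
    exact hG.symm
  have hfix1 : Module.finrank K
      (IntermediateField.fixedField (P : Subgroup (E ≃ₐ[K] E))) = 1 := by
    by_contra hfix1
    have hne : IntermediateField.fixedField (P : Subgroup (E ≃ₐ[K] E)) ≠ ⊥ := fun hb =>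
      hfix1 (by rw [hb, IntermediateField.finrank_bot])
    have hqd : q ∣ Module.finrank K
        (IntermediateField.fixedField (P : Subgroup (E ≃ₐ[K] E))) :=
      dvd_trans (Nat.minFac_dvd p) (C1 _ hne)
    have hKfix : Module.finrank K
        (IntermediateField.fixedField (P : Subgroup (E ≃ₐ[K] E))) =
        ordCompl[q] (Nat.card (E ≃ₐ[K] E)) := by
      refine Nat.eq_of_mul_eq_mul_right (pow_pos hqprime.pos v) ?_
      rw [← hPcard, artin, hPcard, Nat.div_mul_cancel (Nat.ordProj_dvd _ _)]
    rw [hKfix] at hqd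
    exact Nat.not_dvd_ordCompl hqprime hcard0 hqd
  have hcard : Nat.card (E ≃ₐ[K] E) = q ^ v := by
    have := artin (P : Subgroup (E ≃ₐ[K] E))
    rw [hfix1, one_mul, hPcard] at this
    exact this.symm
  refine ⟨v, by rw [← hG, ← Nat.card_eq_fintype_card, hcard], ?_⟩
  intro hE1
  have hv1 : v ≠ 0 := by
    intro h0
    rw [h0, pow_zero] at hcard
    rw [← hG, ← Nat.card_eq_fintype_card, hcard] at hE1
    exact hE1 rfl
  obtain ⟨H, hH⟩ := Sylow.exists_subgroup_card_pow_prime q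
    (show q ^ (v - 1) ∣ Nat.card (E ≃ₐ[K] E) from hcard ▸ pow_dvd_pow q (Nat.sub_le v 1))
  have hKH : Module.finrank K (IntermediateField.fixedField H) = q := by
    refine Nat.eq_of_mul_eq_mul_right (pow_pos hqprime.pos (v - 1)) ?_
    rw [← hH, artin, hH, hcard, ← pow_succ',
      Nat.sub_add_cancel (Nat.one_le_iff_ne_zero.mpr hv1)]
  have hHne : IntermediateField.fixedField H ≠ ⊥ := by
    intro hb
    rw [hb, IntermediateField.finrank_bot] at hKH
    exact hqprime.one_lt.ne hKH
  have hpq : p ∣ q := hKH ▸ C1 _ hHne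
  exact (hqprime.eq_one_or_self_of_dvd p hpq).resolve_left hp1

theorem irreducible_natDegree_pow_of_antiClosure_ne (K : Type*) [Field K]
    (h : antiClosure K ≠ ⊥) (p : ℕ) (hp : p = Module.finrank K (antiClosure K))
    (f : K[X]) (hf : Irreducible f) :
    ∃ n : ℕ, f.natDegree = p ^ n := by
  classical
  by_cases hd1 : f.natDegree = 1
  · exact ⟨0, by simpa using hd1⟩
  have hp1 : p ≠ 1 := fun h1 => h (IntermediateField.finrank_eq_one_iff.mp (by rw [← hp, h1]))
  -- a root of f in the algebraic closure
  have hd0 : f.natDegree ≠ 0 := hf.natDegree_pos.ne'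
  obtain ⟨α, hα⟩ := IsAlgClosed.exists_aeval_eq_zero (AlgebraicClosure K) f
    (ne_of_gt (Polynomial.degree_pos_of_irreducible hf))
  have hαint : IsIntegral K α := Algebra.IsIntegral.isIntegral α
  have hdeg : (minpoly K α).natDegree = f.natDegree := by
    rw [← minpoly.eq_of_irreducible hf hα,
      natDegree_mul_C (inv_ne_zero (leadingCoeff_ne_zero.mpr hf.ne_zero))]
  by_cases hsep : ∀ x ∈ antiClosure K, IsSeparable K x
  · -- Case B: every element of the anti-closure is separable over K
    obtain ⟨z₀, hz₀mem, hz₀b⟩ : ∃ z, z ∈ antiClosure K ∧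
        z ∉ (⊥ : IntermediateField K (AlgebraicClosure K)) := by
      by_contra hno
      push_neg at hno
      exact h (le_bot_iff.mp fun x hx => hno x hx)
    have hz₀int : IsIntegral K z₀ := Algebra.IsIntegral.isIntegral z₀
    -- K is a perfect field
    haveI : PerfectField K := by
      rcases CharP.char_is_prime_or_zero K (ringChar K) with hq | h0
      · haveI : Fact (ringChar K).Prime := ⟨hq⟩
        haveI : ExpChar K (ringChar K) := ExpChar.prime hq
        haveI : PerfectRing K (ringChar K) := by
          apply PerfectRing.ofSurjective
          intro a
          by_contra hno
          push_neg at hno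
          obtain ⟨y, hy⟩ := IsAlgClosed.exists_aeval_eq_zero (AlgebraicClosure K)
            (X ^ ringChar K - C a)
            (by rw [degree_X_pow_sub_C hq.pos]; exact_mod_cast hq.ne_zero)
          rw [map_sub, map_pow, aeval_X, aeval_C, sub_eq_zero] at hy
          have hyb : y ∉ (⊥ : IntermediateField K (AlgebraicClosure K)) := by
            intro hyb
            rw [IntermediateField.mem_bot] at hyb
            obtain ⟨b, rfl⟩ := hyb
            rw [← map_pow] at hy
            refine hno b ?_
            rw [frobenius_def]
            exact (algebraMap K (AlgebraicClosure K)).injective hy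
          have hyint : IsIntegral K y := Algebra.IsIntegral.isIntegral y
          haveI : FiniteDimensional K K⟮y⟯ := adjoin.finiteDimensional hyint
          have hne : K⟮y⟯ ≠ ⊥ := fun hb => hyb (adjoin_simple_eq_bot_iff.mp hb)
          have hz₀y : z₀ ∈ K⟮y⟯ := antiClosure_le hne ‹_› hz₀mem
          haveI : IsPurelyInseparable K K⟮y⟯ :=
            (isPurelyInseparable_adjoin_simple_iff_pow_mem K _ (ringChar K)).mpr
              ⟨1, by rw [pow_one]; exact ⟨a, hy.symm⟩⟩
          obtain ⟨m, c, hc⟩ := IsPurelyInseparable.pow_mem K (ringChar K)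
            (⟨z₀, hz₀y⟩ : K⟮y⟯)
          have hz₀pow : z₀ ^ ringChar K ^ m ∈
              (algebraMap K (AlgebraicClosure K)).range := by
            refine ⟨c, ?_⟩
            have := congrArg (algebraMap K⟮y⟯ (AlgebraicClosure K)) hc
            rwa [map_pow] at this
          have h1 : (minpoly K z₀).natSepDegree = 1 :=
            (minpoly.natSepDegree_eq_one_iff_pow_mem (ringChar K)).mpr ⟨m, hz₀pow⟩
          have h2 := (hsep z₀ hz₀mem).natSepDegree_eq_natDegree
          have h3 : (minpoly K z₀).degree = 1 :=
            (degree_eq_iff_natDegree_eq (minpoly.ne_zero hz₀int)).mpr (by rw [← h2]; exact h1)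
          exact hz₀b (IntermediateField.mem_bot.mpr
            (minpoly.mem_range_of_degree_eq_one K z₀ h3))
        exact PerfectRing.toPerfectField K (ringChar K)
      · haveI : CharP K 0 := h0 ▸ ringChar.charP K
        haveI : CharZero K := CharP.charP_to_charZero K
        infer_instance
    have hfsep : f.Separable := PerfectField.separable_of_irreducible hf
    -- the splitting field of f inside the algebraic closure
    set Nf := adjoin K (f.rootSet (AlgebraicClosure K)) with hNf
    have hαN : α ∈ Nf := subset_adjoin K _ (by
      rw [mem_rootSet]
      exact ⟨hf.ne_zero, hα⟩)
    haveI : Polynomial.IsSplittingField K Nf f :=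
      adjoin_rootSet_isSplittingField (IsAlgClosed.splits _)
    haveI : FiniteDimensional K Nf := Polynomial.IsSplittingField.finiteDimensional Nf f
    haveI : IsGalois K Nf := IsGalois.of_separable_splitting_field hfsep
    have hdvdN : f.natDegree ∣ Module.finrank K Nf := by
      haveI : FiniteDimensional K K⟮α⟯ := adjoin.finiteDimensional hαint
      have hle : K⟮α⟯ ≤ Nf := adjoin_simple_le_iff.mpr hαN
      refine ⟨IntermediateField.relfinrank K⟮α⟯ Nf, ?_⟩
      rw [← IntermediateField.finrank_bot_mul_relfinrank hle, adjoin.finrank hαint, hdeg]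
    obtain ⟨v, hEv, himp⟩ := galois_core h hp hp1 Nf.val
    have hdvd' : f.natDegree ∣ p.minFac ^ v := hEv ▸ hdvdN
    obtain ⟨i, hi, he⟩ := (Nat.dvd_prime_pow (Nat.minFac_prime hp1)).mp hdvd'
    have hE1 : Module.finrank K Nf ≠ 1 := by
      intro h1
      rw [h1, Nat.dvd_one] at hdvdN
      exact hd1 hdvdN
    rw [← himp hE1] at he
    exact ⟨i, he⟩
  · push_neg at hsep
    obtain ⟨x₀, hx₀mem, hx₀⟩ := hsep
    have hx₀int : IsIntegral K x₀ := Algebra.IsIntegral.isIntegral x₀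
    have hq : (ringChar K).Prime := by
      rcases CharP.char_is_prime_or_zero K (ringChar K) with hq | h0
      · exact hq
      · haveI : CharP K 0 := h0 ▸ ringChar.charP K
        haveI : CharZero K := CharP.charP_to_charZero K
        exact absurd (minpoly.irreducible hx₀int).separable hx₀
    set q := ringChar K with hqdef
    haveI : Fact q.Prime := ⟨hq⟩
    haveI : ExpChar K q := ExpChar.prime hq
    -- every separable element lies in the bottom field
    have hbot : ∀ z : AlgebraicClosure K, IsSeparable K z →
        z ∈ (⊥ : IntermediateField K (AlgebraicClosure K)) := by
      intro z hz
      by_contra hzb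
      haveI : FiniteDimensional K K⟮z⟯ := adjoin.finiteDimensional hz.isIntegral
      have hne : K⟮z⟯ ≠ ⊥ := fun hb => hzb (adjoin_simple_eq_bot_iff.mp hb)
      have hx0z : x₀ ∈ K⟮z⟯ := antiClosure_le hne ‹_› hx₀mem
      haveI : Algebra.IsSeparable K K⟮z⟯ :=
        (isSeparable_adjoin_simple_iff_isSeparable K (AlgebraicClosure K)).mpr hz
      have h5 := Algebra.IsSeparable.isSeparable K (⟨x₀, hx0z⟩ : K⟮z⟯)
      have h6 : minpoly K x₀ = minpoly K (⟨x₀, hx0z⟩ : K⟮z⟯) :=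
        minpoly.algebraMap_eq (algebraMap K⟮z⟯ (AlgebraicClosure K)).injective
          (⟨x₀, hx0z⟩ : K⟮z⟯)
      exact hx₀ (show (minpoly K x₀).Separable from h6 ▸ h5)
    -- every element has minimal polynomial of separable degree one
    have hnsd : ∀ y : AlgebraicClosure K, (minpoly K y).natSepDegree = 1 := by
      intro y
      have hyint : IsIntegral K y := Algebra.IsIntegral.isIntegral y
      obtain ⟨g, hgsep, m, hgm⟩ := (minpoly.irreducible hyint).hasSeparableContraction q
      have hβ : aeval (y ^ q ^ m) g = 0 := by
        rw [← expand_aeval, hgm, minpoly.aeval]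
      have hsepβ : IsSeparable K (y ^ q ^ m) := hgsep.of_dvd (minpoly.dvd K _ hβ)
      have hb := hbot _ hsepβ
      rw [IntermediateField.mem_bot] at hb
      obtain ⟨c, hc⟩ := hb
      exact (minpoly.natSepDegree_eq_one_iff_pow_mem q).mpr ⟨m, ⟨c, hc⟩⟩
    -- the degree of f is a power of q
    obtain ⟨n, c, hc⟩ := (minpoly.natSepDegree_eq_one_iff_eq_X_pow_sub_C q).mp (hnsd α)
    have hd : f.natDegree = q ^ n := by rw [← hdeg, hc, natDegree_X_pow_sub_C]
    -- now show p = q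
    obtain ⟨j, y₀, hj⟩ := (minpoly.natSepDegree_eq_one_iff_eq_X_pow_sub_C q).mp (hnsd x₀)
    have hj1 : j ≠ 0 := by
      rintro rfl
      rw [pow_zero, pow_one] at hj
      exact hx₀ (show (minpoly K x₀).Separable from hj ▸ separable_X_sub_C)
    have hx₀pow : x₀ ^ q ^ j = algebraMap K (AlgebraicClosure K) y₀ := by
      have h7 := minpoly.aeval K x₀
      rw [hj, map_sub, map_pow, aeval_X, aeval_C, sub_eq_zero] at h7
      exact h7
    set z := x₀ ^ q ^ (j - 1) with hzdef
    have hz_pow : z ^ q = algebraMap K (AlgebraicClosure K) y₀ := by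
      rw [hzdef, ← pow_mul, ← pow_succ, Nat.sub_add_cancel (Nat.one_le_iff_ne_zero.mpr hj1), hx₀pow]
    have hzb : z ∉ (⊥ : IntermediateField K (AlgebraicClosure K)) := by
      intro hzb
      rw [IntermediateField.mem_bot] at hzb
      obtain ⟨c', hc'⟩ := hzb
      have hdvd : minpoly K x₀ ∣ X ^ q ^ (j - 1) - C c' :=
        minpoly.dvd K x₀ (by rw [map_sub, map_pow, aeval_X, aeval_C, ← hzdef, hc', sub_self])
      have hdeg2 := natDegree_le_of_dvd hdvd
        (X_pow_sub_C_ne_zero (pow_pos hq.pos _) c')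
      rw [hj, natDegree_X_pow_sub_C, natDegree_X_pow_sub_C] at hdeg2
      exact absurd hdeg2 (not_le.mpr (Nat.pow_lt_pow_right hq.one_lt
        (Nat.sub_lt (Nat.pos_of_ne_zero hj1) one_pos)))
    haveI : CharP (AlgebraicClosure K) q :=
      charP_of_injective_algebraMap (algebraMap K (AlgebraicClosure K)).injective q
    have hirr : Irreducible (X ^ q - C y₀ : K[X]) := by
      apply X_pow_sub_C_irreducible_of_prime hq
      intro b hb
      apply hzb
      rw [IntermediateField.mem_bot]
      refine ⟨b, ?_⟩
      have h8 : (algebraMap K (AlgebraicClosure K) b - z) ^ q = 0 := by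
        rw [sub_pow_char, hz_pow, ← map_pow, hb, sub_self]
      exact sub_eq_zero.mp (pow_eq_zero_iff hq.ne_zero |>.mp h8)
    have hminz : minpoly K z = X ^ q - C y₀ :=
      (minpoly.eq_of_irreducible_of_monic hirr
        (by rw [map_sub, map_pow, aeval_X, aeval_C, hz_pow, sub_self])
        (monic_X_pow_sub_C _ hq.ne_zero)).symm
    have hzint : IsIntegral K z := Algebra.IsIntegral.isIntegral z
    haveI : FiniteDimensional K K⟮z⟯ := adjoin.finiteDimensional hzint
    have hfr : Module.finrank K K⟮z⟯ = q := by
      rw [adjoin.finrank hzint, hminz, natDegree_X_pow_sub_C]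
    have hne : K⟮z⟯ ≠ ⊥ := fun hb => hzb (adjoin_simple_eq_bot_iff.mp hb)
    have hpq : p ∣ q := by
      rw [hp, ← hfr]
      exact finrank_antiClosure_dvd hne ‹_›
    have hpq' : p = q := (hq.eq_one_or_self_of_dvd p hpq).resolve_left hp1
    exact ⟨n, by rw [hd, hpq']⟩
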